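/- Suppose h ∈ 𝓗 and set λ₊ = S + h + λ₀. Then for every ϑ ∈ [ϑ₀, ϑ₀ + δ], the Kullback–Leibler divergence J is differentiable at ϑ with J′(ϑ) = λ₊·ln((S + λ₀)/(S·(1 − (ϑ − ϑ₀)/δ)^κ + λ₀)) + S·(1 − (ϑ − ϑ₀)/δ)^κ − S + I₂(ϑ), where I₂(ϑ) = ∫_{0}^{1 − (ϑ − ϑ₀)/δ} S·κ·x^{κ−1}·[(S + h)·(x + (ϑ − ϑ₀)/δ)^κ − S·x^κ]/(S·x^κ + λ₀) dx. -/

import Mathlib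

/-!
After the substitution `t = s + ϑ`, near a given `ϑ ≥ ϑ₀` the divergence reads
`J(ϑ) = ∫_{ϑ₀}^{ϑ} G + ∫_0^b klShift(ϑ, s) ds + (τ - ϑ - b) c`, where `G` is the integrand on
`[ϑ₀, ϑ]` (the model intensity is still `lam0` there) and `c` its value once both intensities
are saturated. The middle term is differentiated under the integral sign: for `ϑ > ϑ₀` the cusp
of the real intensity stays away from `s = 0` and dominated convergence applies, while at
`ϑ = ϑ₀`, where both cusps meet at `s = 0`, the contribution of `[0, ρ]` to the difference
quotients is `O(ψ(2ρ))` because both intensities are still close to `lam0` there. Integrating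
`∂_s klShift` over `[0, b]` then collapses `J'(ϑ)` to an integral against the derivative of the
model cusp alone, which the rescaling `s = δ y` turns into the stated formula.
-/

open MeasureTheory Real Set Filter

/-- The cusp signal shape: `ψ(x) = (x/δ)^κ` for `0 < x < δ`, `1` for `x ≥ δ`, `0` for `x ≤ 0`. -/
noncomputable def psi (δ κ : ℝ) (x : ℝ) : ℝ :=
  if δ ≤ x then 1 else if 0 < x then (x / δ) ^ κ else 0

/-- Theoretical intensity `λ(ϑ, t) = S ψ(t − ϑ) + λ₀`. -/
noncomputable def lamT (S lam0 δ κ : ℝ) (ϑ t : ℝ) : ℝ :=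
  S * psi δ κ (t - ϑ) + lam0

/-- Real intensity `λ*(ϑ₀, t) = (S + h) ψ(t − ϑ₀) + λ₀`. -/
noncomputable def lamR (S h lam0 δ κ : ℝ) (ϑ₀ t : ℝ) : ℝ :=
  (S + h) * psi δ κ (t - ϑ₀) + lam0

/-- The Kullback–Leibler divergence `J(ϑ)`. -/
noncomputable def JKL (S h lam0 δ κ τ ϑ₀ : ℝ) (ϑ : ℝ) : ℝ :=
  ∫ t in (min ϑ ϑ₀)..τ,
    (lamT S lam0 δ κ ϑ t / lamR S h lam0 δ κ ϑ₀ t - 1 -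
      Real.log (lamT S lam0 δ κ ϑ t / lamR S h lam0 δ κ ϑ₀ t)) *
      lamR S h lam0 δ κ ϑ₀ t

open scoped Topology

section Cusp

variable {δ κ x : ℝ}

lemma psi_of_nonpos (hδ : 0 < δ) (hx : x ≤ 0) : psi δ κ x = 0 := by
  simp [psi, not_le.2 (hx.trans_lt hδ), not_lt.2 hx]

lemma psi_of_le (hx : δ ≤ x) : psi δ κ x = 1 := if_pos hx

lemma psi_of_mem_Icc (hδ : 0 < δ) (hκ : 0 < κ) (hx : x ∈ Icc 0 δ) :
    psi δ κ x = (x / δ) ^ κ := by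
  obtain ⟨h0, h1⟩ := hx
  rcases h1.eq_or_lt with rfl | h1
  · rw [psi_of_le le_rfl, div_self hδ.ne', one_rpow]
  rcases h0.eq_or_lt with rfl | h0
  · rw [psi_of_nonpos hδ le_rfl, zero_div, zero_rpow hκ.ne']
  · simp [psi, not_le.2 h1, h0]

lemma psi_eq_min (hδ : 0 < δ) (hκ : 0 < κ) : psi δ κ x = min 1 ((max x 0 / δ) ^ κ) := by
  rcases le_or_gt x 0 with hx | hx
  · rw [psi_of_nonpos hδ hx, max_eq_right hx, zero_div, zero_rpow hκ.ne',
      min_eq_right zero_le_one]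
  rw [max_eq_left hx.le]
  rcases le_or_gt δ x with hδx | hxδ
  · rw [psi_of_le hδx, min_eq_left (one_le_rpow ((one_le_div hδ).2 hδx) hκ.le)]
  · rw [psi_of_mem_Icc hδ hκ ⟨hx.le, hxδ.le⟩,
      min_eq_right (rpow_le_one (by positivity) ((div_le_one hδ).2 hxδ.le) hκ.le)]

lemma psi_nonneg : 0 ≤ psi δ κ x := by
  unfold psi
  split_ifs with h₁ h₂
  · exact zero_le_one
  · exact rpow_nonneg (div_nonneg h₂.le (h₂.trans (not_le.1 h₁)).le) _
  · exact le_rfl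

lemma psi_le_one (hκ : 0 ≤ κ) : psi δ κ x ≤ 1 := by
  unfold psi
  split_ifs with h₁ h₂
  · exact le_rfl
  · have hδ : 0 < δ := h₂.trans (not_le.1 h₁)
    exact rpow_le_one (div_nonneg h₂.le hδ.le) ((div_le_one hδ).2 (not_le.1 h₁).le) hκ
  · exact zero_le_one

lemma monotone_psi (hδ : 0 < δ) (hκ : 0 < κ) : Monotone (psi δ κ) := by
  intro x y hxy
  rw [psi_eq_min hδ hκ, psi_eq_min hδ hκ]
  gcongr

lemma continuous_psi (hδ : 0 < δ) (hκ : 0 < κ) : Continuous (psi δ κ) := by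
  have h := funext fun x => psi_eq_min (δ := δ) (κ := κ) (x := x) hδ hκ
  rw [h]
  exact continuous_const.min
    (((continuous_id.max continuous_const).div_const δ).rpow_const fun _ => Or.inr hκ.le)

@[fun_prop]
lemma measurable_psi : Measurable (psi δ κ) :=
  Measurable.ite measurableSet_Ici measurable_const
    (Measurable.ite measurableSet_Ioi ((measurable_id.div_const δ).pow_const κ) measurable_const)

/-- The derivative of `psi δ κ` off `{0, δ}`, and its right derivative at `δ`; the value `0` at
the cusp `x = 0`, where the right derivative is infinite, is a junk value. -/
noncomputable def psiDeriv (δ κ x : ℝ) : ℝ :=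
  if 0 < x ∧ x < δ then κ / δ * (x / δ) ^ (κ - 1) else 0

lemma psiDeriv_nonneg (hδ : 0 < δ) (hκ : 0 ≤ κ) : 0 ≤ psiDeriv δ κ x := by
  unfold psiDeriv
  split_ifs with hx
  · exact mul_nonneg (div_nonneg hκ hδ.le) (rpow_nonneg (div_nonneg hx.1.le hδ.le) _)
  · exact le_rfl

lemma psiDeriv_le (hδ : 0 < δ) (hκ : 0 ≤ κ) (hx : 0 < x) :
    psiDeriv δ κ x ≤ κ / δ ^ κ * x ^ (κ - 1) := by
  have hrhs : κ / δ * (x / δ) ^ (κ - 1) = κ / δ ^ κ * x ^ (κ - 1) := by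
    rw [div_rpow hx.le hδ.le, rpow_sub_one hδ.ne']
    field_simp
  unfold psiDeriv
  split_ifs
  · exact hrhs.le
  · rw [← hrhs]
    exact mul_nonneg (div_nonneg hκ hδ.le) (rpow_nonneg (div_nonneg hx.le hδ.le) _)

@[fun_prop]
lemma measurable_psiDeriv : Measurable (psiDeriv δ κ) :=
  Measurable.ite (measurableSet_Ioi.inter measurableSet_Iio)
    (measurable_const.mul ((measurable_id.div_const δ).pow_const (κ - 1))) measurable_const

lemma hasDerivAt_psi (hδ : 0 < δ) (hκ : 0 < κ) (hx : 0 < x) (hxδ : x ≠ δ) :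
    HasDerivAt (psi δ κ) (psiDeriv δ κ x) x := by
  rcases hxδ.lt_or_gt with hxδ | hxδ
  · have hpow : HasDerivAt (fun y => (y / δ) ^ κ) (κ / δ * (x / δ) ^ (κ - 1)) x := by
      convert ((hasDerivAt_id' x).div_const δ).rpow_const (p := κ)
        (Or.inl (div_pos hx hδ).ne') using 1
      ring
    rw [psiDeriv, if_pos ⟨hx, hxδ⟩]
    refine hpow.congr_of_eventuallyEq ?_
    filter_upwards [Ioo_mem_nhds hx hxδ] with y hy
    exact psi_of_mem_Icc hδ hκ (Ioo_subset_Icc_self hy)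
  · rw [psiDeriv, if_neg fun h => h.2.not_gt hxδ]
    refine (hasDerivAt_const x (1 : ℝ)).congr_of_eventuallyEq ?_
    filter_upwards [Ioi_mem_nhds hxδ] with y hy
    exact psi_of_le hy.le

lemma hasDerivWithinAt_psi_Ici (hδ : 0 < δ) (hκ : 0 < κ) (hx : 0 < x) :
    HasDerivWithinAt (psi δ κ) (psiDeriv δ κ x) (Ici x) x := by
  rcases ne_or_eq x δ with hxδ | rfl
  · exact (hasDerivAt_psi hδ hκ hx hxδ).hasDerivWithinAt
  · rw [psiDeriv, if_neg fun h => h.2.false]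
    exact (hasDerivWithinAt_const _ _ (1 : ℝ)).congr (fun y hy => psi_of_le hy) (psi_of_le le_rfl)

lemma abs_psi_sub_psi_le (hδ : 0 < δ) (hκ₀ : 0 < κ) (hκ₁ : κ ≤ 1) {c y : ℝ} (hc : 0 < c)
    (hcx : c ≤ x) (hcy : c ≤ y) :
    |psi δ κ y - psi δ κ x| ≤ κ / δ ^ κ * c ^ (κ - 1) * |y - x| := by
  wlog hxy : x ≤ y generalizing x y
  · rw [abs_sub_comm, abs_sub_comm y]
    exact this hcy hcx (le_of_not_ge hxy)
  have hx : 0 < x := hc.trans_le hcx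
  rw [abs_of_nonneg (sub_nonneg.2 hxy)]
  refine norm_image_sub_le_of_norm_deriv_right_le_segment (continuous_psi hδ hκ₀).continuousOn
    (fun z hz => hasDerivWithinAt_psi_Ici hδ hκ₀ (hx.trans_le hz.1)) (fun z hz => ?_) y ⟨hxy, le_rfl⟩
  have hz0 : 0 < z := hx.trans_le hz.1
  rw [norm_of_nonneg (psiDeriv_nonneg hδ hκ₀.le)]
  refine (psiDeriv_le hδ hκ₀.le hz0).trans ?_
  exact mul_le_mul_of_nonneg_left (rpow_le_rpow_of_nonpos hc (hcx.trans hz.1) (by linarith))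
    (by positivity)

end Cusp

section KLTerm

noncomputable def klTerm (a b : ℝ) : ℝ := (a / b - 1 - log (a / b)) * b

lemma klTerm_self (b : ℝ) : klTerm b b = 0 := by
  rcases eq_or_ne b 0 with rfl | hb <;> simp [klTerm, *]

lemma klTerm_eq {a b : ℝ} (ha : 0 < a) (hb : 0 < b) :
    klTerm a b = a - b - b * log a + b * log b := by
  rw [klTerm, log_div ha.ne' hb.ne']
  field_simp
  ring

lemma Continuous.klTerm {α : Type*} [TopologicalSpace α] {A B : α → ℝ} (hA : Continuous A)
    (hB : Continuous B) (hA₀ : ∀ y, 0 < A y) (hB₀ : ∀ y, 0 < B y) :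
    Continuous fun y => _root_.klTerm (A y) (B y) := by
  have hAB : Continuous fun y => A y / B y := hA.div hB fun y => (hB₀ y).ne'
  exact ((hAB.sub continuous_const).sub (hAB.log fun y => (div_pos (hA₀ y) (hB₀ y)).ne')).mul hB

lemma HasDerivWithinAt.klTerm {A B : ℝ → ℝ} {A' B' x : ℝ} {s : Set ℝ}
    (hA : HasDerivWithinAt A A' s x) (hB : HasDerivWithinAt B B' s x) (hAx : 0 < A x)
    (hBx : 0 < B x) :
    HasDerivWithinAt (fun y => _root_.klTerm (A y) (B y))
      (A' * (1 - B x / A x) + B' * Real.log (B x / A x)) s x := by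
  have hAB := ((hA.sub hB).sub (hB.mul (hA.log hAx.ne'))).add (hB.mul (hB.log hBx.ne'))
  have heq : (fun y => _root_.klTerm (A y) (B y)) =ᶠ[𝓝[s] x]
      fun y => A y - B y - B y * Real.log (A y) + B y * Real.log (B y) := by
    filter_upwards [hA.continuousWithinAt.eventually (eventually_gt_nhds hAx),
      hB.continuousWithinAt.eventually (eventually_gt_nhds hBx)] with y hAy hBy
    exact klTerm_eq hAy hBy
  refine (hAB.congr_of_eventuallyEq heq (klTerm_eq hAx hBx)).congr_deriv ?_
  rw [Real.log_div hBx.ne' hAx.ne']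
  field_simp
  ring

lemma HasDerivAt.klTerm {A B : ℝ → ℝ} {A' B' x : ℝ} (hA : HasDerivAt A A' x)
    (hB : HasDerivAt B B' x) (hAx : 0 < A x) (hBx : 0 < B x) :
    HasDerivAt (fun y => _root_.klTerm (A y) (B y))
      (A' * (1 - B x / A x) + B' * Real.log (B x / A x)) x := by
  rw [← hasDerivWithinAt_univ] at *
  exact hA.klTerm hB hAx hBx

lemma abs_log_div_le {m a b : ℝ} (hm : 0 < m) (ha : m ≤ a) (hb : m ≤ b) :
    |log (b / a)| ≤ |b - a| / m := by
  have ha₀ := hm.trans_le ha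
  have hb₀ := hm.trans_le hb
  have key : ∀ {u v : ℝ}, m ≤ u → 0 < v → log (v / u) ≤ |v - u| / m := fun {u v} hu hv => by
    have hu₀ := hm.trans_le hu
    calc log (v / u) ≤ v / u - 1 := log_le_sub_one_of_pos (div_pos hv hu₀)
    _ = (v - u) / u := by field_simp
    _ ≤ |v - u| / u := div_le_div_of_nonneg_right (le_abs_self _) hu₀.le
    _ ≤ |v - u| / m := div_le_div_of_nonneg_left (abs_nonneg _) hm hu
  rw [abs_le, neg_le, ← log_inv, inv_div]
  exact ⟨abs_sub_comm a b ▸ key hb ha₀, key ha hb₀⟩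

lemma abs_klTerm_sub_klTerm_le {m M a b₁ b₂ : ℝ} (hm : 0 < m) (ha : m ≤ a) (hb₁ : m ≤ b₁)
    (hb₂ : m ≤ b₂) (hM₁ : |b₁ - a| ≤ M) (hM₂ : |b₂ - a| ≤ M) :
    |klTerm a b₁ - klTerm a b₂| ≤ M / m * |b₁ - b₂| := by
  have hmem : ∀ b ∈ uIcc b₁ b₂, m ≤ b ∧ |b - a| ≤ M := by
    intro b hb
    rw [abs_le] at hM₁ hM₂ ⊢
    rcases mem_uIcc.1 hb with ⟨h₁, h₂⟩ | ⟨h₁, h₂⟩ <;>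
      exact ⟨by linarith, by linarith, by linarith⟩
  have hderiv : ∀ b ∈ uIcc b₁ b₂,
      HasDerivWithinAt (fun b => klTerm a b) (log (b / a)) (uIcc b₁ b₂) b := fun b hb => by
    simpa using HasDerivWithinAt.klTerm (hasDerivWithinAt_const b _ a) (hasDerivWithinAt_id b _)
      (hm.trans_le ha) (hm.trans_le (hmem b hb).1)
  have hbound : ∀ b ∈ uIcc b₁ b₂, ‖log (b / a)‖ ≤ M / m := fun b hb =>
    (abs_log_div_le hm ha (hmem b hb).1).trans (by gcongr; exact (hmem b hb).2)
  simpa [Real.norm_eq_abs] using Convex.norm_image_sub_le_of_norm_hasDerivWithin_le hderiv hbound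
    (convex_uIcc b₁ b₂) right_mem_uIcc left_mem_uIcc

end KLTerm

section Integrals

lemma intervalIntegrable_of_abs_le_rpow {f : ℝ → ℝ} {C p b : ℝ} (hp : -1 < p) (hb : 0 ≤ b)
    (hf : AEStronglyMeasurable f) (hbound : ∀ s ∈ Ioc 0 b, |f s| ≤ C * s ^ p) :
    IntervalIntegrable f volume 0 b := by
  refine ((intervalIntegral.intervalIntegrable_rpow' hp).const_mul C).mono_fun' hf.restrict ?_
  rw [uIoc_of_le hb]
  exact (ae_restrict_iff' measurableSet_Ioc).2 (Eventually.of_forall hbound)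

lemma Monotone.integral_abs_comp_add_sub_le {f : ℝ → ℝ} (hf : Monotone f) {C : ℝ}
    (hC : ∀ x, |f x| ≤ C) (a b η : ℝ) :
    ∫ s in a..b, |f (s + η) - f s| ≤ 2 * C * |η| := by
  have hint : ∀ u v, IntervalIntegrable f volume u v := fun u v => hf.intervalIntegrable
  have hsign : ∫ s in a..b, |f (s + η) - f s| ≤ |∫ s in a..b, (f (s + η) - f s)| := by
    rcases le_total 0 η with hη | hη
    · rw [intervalIntegral.integral_congr fun s _ =>
        abs_of_nonneg (sub_nonneg.2 (hf (le_add_of_nonneg_right hη)))]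
      exact le_abs_self _
    · rw [intervalIntegral.integral_congr fun s _ =>
        abs_of_nonpos (sub_nonpos.2 (hf (add_le_of_nonpos_right hη))), intervalIntegral.integral_neg]
      exact neg_le_abs _
  have hint_shift : IntervalIntegrable (fun s => f (s + η)) volume a b :=
    Monotone.intervalIntegrable fun x y hxy => hf (by linarith)
  have hshift : ∫ s in a..b, (f (s + η) - f s) =
      (∫ s in (a + η)..a, f s) - ∫ s in (b + η)..b, f s := by
    rw [intervalIntegral.integral_sub hint_shift (hint _ _),
      intervalIntegral.integral_comp_add_right f η,
      intervalIntegral.integral_interval_sub_interval_comm (hint _ _) (hint _ _) (hint _ _)]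
  have hpiece : ∀ u : ℝ, |∫ s in (u + η)..u, f s| ≤ C * |η| := fun u => by
    simpa using intervalIntegral.norm_integral_le_of_norm_le_const (a := u + η) (b := u)
      fun x _ => (Real.norm_eq_abs _).trans_le (hC x)
  calc ∫ s in a..b, |f (s + η) - f s| ≤ |∫ s in a..b, (f (s + η) - f s)| := hsign
    _ ≤ |∫ s in (a + η)..a, f s| + |∫ s in (b + η)..b, f s| := hshift ▸ abs_sub _ _
    _ ≤ 2 * C * |η| := by linarith [hpiece a, hpiece b]

theorem hasDerivAt_intervalIntegral_of_head {g : ℝ → ℝ → ℝ} {q : ℝ → ℝ} {x₀ a b : ℝ}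
    (hab : a < b) (hg : ∀ x, IntervalIntegrable (g x) volume a b)
    (hq : IntervalIntegrable q volume a b)
    (htail : ∀ ρ ∈ Ioo a b, HasDerivAt (fun x => ∫ s in ρ..b, g x s) (∫ s in ρ..b, q s) x₀)
    (hhead : ∀ ε > 0, ∀ᶠ ρ in 𝓝[>] a, ∀ᶠ x in 𝓝 x₀,
      |∫ s in a..ρ, (g x s - g x₀ s)| ≤ ε * |x - x₀|) :
    HasDerivAt (fun x => ∫ s in a..b, g x s) (∫ s in a..b, q s) x₀ := by
  rw [hasDerivAt_iff_isLittleO, Asymptotics.isLittleO_iff]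
  intro ε hε
  have hq_head : Tendsto (fun ρ => ∫ s in a..ρ, q s) (𝓝[>] a) (𝓝 0) := by
    have hcont := intervalIntegral.continuousOn_primitive_interval' hq left_mem_uIcc a
      left_mem_uIcc
    rw [uIcc_of_le hab.le] at hcont
    simpa using (hcont.mono_of_mem_nhdsWithin (Icc_mem_nhdsGT hab)).tendsto
  obtain ⟨ρ, ⟨hhead_ρ, hq_ρ⟩, hρ⟩ := ((hhead (ε / 3) (by positivity)).and
    (hq_head.eventually (Metric.closedBall_mem_nhds 0 (show 0 < ε / 3 by positivity)))).and
    (Ioo_mem_nhdsGT hab) |>.exists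
  have hsplit : ∀ {f : ℝ → ℝ}, IntervalIntegrable f volume a b →
      ∫ s in a..b, f s = (∫ s in a..ρ, f s) + ∫ s in ρ..b, f s := fun hf =>
    (intervalIntegral.integral_add_adjacent_intervals
      (hf.mono_set (uIcc_subset_uIcc_left (mem_uIcc_of_le hρ.1.le hρ.2.le)))
      (hf.mono_set (uIcc_subset_uIcc_right (mem_uIcc_of_le hρ.1.le hρ.2.le)))).symm
  have hhead_int : ∀ x, IntervalIntegrable (g x) volume a ρ := fun x =>
    (hg x).mono_set (uIcc_subset_uIcc_left (mem_uIcc_of_le hρ.1.le hρ.2.le))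
  filter_upwards [hhead_ρ, (hasDerivAt_iff_isLittleO.1 (htail ρ hρ)).def
    (show 0 < ε / 3 by positivity)] with x hx_head hx_tail
  rw [dist_zero_right, Real.norm_eq_abs] at hq_ρ
  rw [intervalIntegral.integral_sub (hhead_int x) (hhead_int x₀)] at hx_head
  simp only [Real.norm_eq_abs, smul_eq_mul] at hx_tail ⊢
  rw [hsplit (hg x), hsplit (hg x₀), hsplit hq]
  calc |(∫ s in a..ρ, g x s) + (∫ s in ρ..b, g x s) - ((∫ s in a..ρ, g x₀ s) +
        ∫ s in ρ..b, g x₀ s) - (x - x₀) * ((∫ s in a..ρ, q s) + ∫ s in ρ..b, q s)|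
      = |((∫ s in a..ρ, g x s) - ∫ s in a..ρ, g x₀ s) - (x - x₀) * (∫ s in a..ρ, q s) +
        ((∫ s in ρ..b, g x s) - (∫ s in ρ..b, g x₀ s) - (x - x₀) * ∫ s in ρ..b, q s)| := by
        congr 1; ring
    _ ≤ ε / 3 * |x - x₀| + |x - x₀| * (ε / 3) + ε / 3 * |x - x₀| := by
        refine (abs_add_le _ _).trans (add_le_add ((abs_sub _ _).trans (add_le_add hx_head ?_))
          hx_tail)
        rw [abs_mul]
        exact mul_le_mul_of_nonneg_left hq_ρ (abs_nonneg _)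
    _ = ε * |x - x₀| := by ring

end Integrals

section Shift

variable {S h lam0 δ κ ϑ₀ : ℝ}

/-- The integrand of `JKL … ϑ` after the substitution `t = s + ϑ`. -/
noncomputable def klShift (S h lam0 δ κ ϑ₀ ϑ s : ℝ) : ℝ :=
  klTerm (S * psi δ κ s + lam0) ((S + h) * psi δ κ (s + ϑ - ϑ₀) + lam0)

/-- `∂_ϑ klShift`; it is also the part of `∂_s klShift` coming from the real intensity. -/
noncomputable def klShiftDerivR (S h lam0 δ κ ϑ₀ ϑ s : ℝ) : ℝ :=
  (S + h) * psiDeriv δ κ (s + ϑ - ϑ₀) *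
    log (((S + h) * psi δ κ (s + ϑ - ϑ₀) + lam0) / (S * psi δ κ s + lam0))

/-- The part of `∂_s klShift` coming from the model intensity. -/
noncomputable def klShiftDerivT (S h lam0 δ κ ϑ₀ ϑ s : ℝ) : ℝ :=
  S * psiDeriv δ κ s * (1 - ((S + h) * psi δ κ (s + ϑ - ϑ₀) + lam0) / (S * psi δ κ s + lam0))

lemma le_mul_psi_add {c : ℝ} (hc : 0 ≤ c) (x : ℝ) : lam0 ≤ c * psi δ κ x + lam0 :=
  le_add_of_nonneg_left (mul_nonneg hc psi_nonneg)

lemma abs_mul_add_sub_mul_add_le {a b u v P l : ℝ} (ha : 0 ≤ a) (hb : 0 ≤ b) (hu : u ∈ Icc 0 P)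
    (hv : v ∈ Icc 0 P) : |a * u + l - (b * v + l)| ≤ (a + b) * P := by
  obtain ⟨hu₀, huP⟩ := hu
  obtain ⟨hv₀, hvP⟩ := hv
  rw [abs_le]
  constructor <;> nlinarith [mul_nonneg ha hu₀, mul_nonneg hb hv₀]

variable (hS : 0 ≤ S) (hSh : 0 ≤ S + h) (hlam0 : 0 < lam0) (hδ : 0 < δ) (hκ₀ : 0 < κ)
  (hκ₁ : κ ≤ 1)

include hS hSh hlam0 in
lemma continuous_klShift (hψ : Continuous (psi δ κ)) (ϑ : ℝ) :
    Continuous (klShift S h lam0 δ κ ϑ₀ ϑ) :=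
  Continuous.klTerm (continuous_const.mul hψ |>.add continuous_const)
    (continuous_const.mul (hψ.comp (by fun_prop)) |>.add continuous_const)
    (fun x => hlam0.trans_le (le_mul_psi_add hS x)) (fun x => hlam0.trans_le (le_mul_psi_add hSh _))

include hS hSh in
lemma abs_intensity_sub_le (hκ : 0 ≤ κ) (u v : ℝ) :
    |(S + h) * psi δ κ u + lam0 - (S * psi δ κ v + lam0)| ≤ 2 * S + h := by
  simpa [two_mul, add_right_comm] using abs_mul_add_sub_mul_add_le (l := lam0) (P := 1) hSh hS
    ⟨psi_nonneg, psi_le_one (x := u) hκ⟩ ⟨psi_nonneg, psi_le_one (x := v) hκ⟩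

include hS hSh hlam0 in
lemma abs_klShift_sub_klShift_le {P x₁ x₂ s : ℝ} (hs : psi δ κ s ≤ P)
    (h₁ : psi δ κ (s + x₁ - ϑ₀) ≤ P) (h₂ : psi δ κ (s + x₂ - ϑ₀) ≤ P) :
    |klShift S h lam0 δ κ ϑ₀ x₁ s - klShift S h lam0 δ κ ϑ₀ x₂ s| ≤
      (2 * S + h) * P / lam0 * ((S + h) * |psi δ κ (s + x₁ - ϑ₀) - psi δ κ (s + x₂ - ϑ₀)|) := by
  have hM : ∀ x, psi δ κ (s + x - ϑ₀) ≤ P →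
      |(S + h) * psi δ κ (s + x - ϑ₀) + lam0 - (S * psi δ κ s + lam0)| ≤ (2 * S + h) * P :=
    fun x hx => (abs_mul_add_sub_mul_add_le hSh hS ⟨psi_nonneg, hx⟩ ⟨psi_nonneg, hs⟩).trans_eq
      (by ring)
  refine (abs_klTerm_sub_klTerm_le hlam0 (le_mul_psi_add hS s) (le_mul_psi_add hSh _)
    (le_mul_psi_add hSh _) (hM x₁ h₁) (hM x₂ h₂)).trans_eq ?_
  rw [add_sub_add_right_eq_sub, ← mul_sub, abs_mul, abs_of_nonneg hSh]

include hS hSh hlam0 hδ hκ₀ in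
lemma hasDerivAt_klShift {ϑ s : ℝ} (hs : 0 < s + ϑ - ϑ₀) (hsδ : s + ϑ - ϑ₀ ≠ δ) :
    HasDerivAt (fun x => klShift S h lam0 δ κ ϑ₀ x s) (klShiftDerivR S h lam0 δ κ ϑ₀ ϑ s) ϑ := by
  have hψ : HasDerivAt (fun x => psi δ κ (s + x - ϑ₀)) (psiDeriv δ κ (s + ϑ - ϑ₀)) ϑ := by
    simpa [Function.comp_def] using (hasDerivAt_psi hδ hκ₀ hs hsδ).comp ϑ
      (((hasDerivAt_id ϑ).const_add s).sub_const ϑ₀)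
  simpa [klShift, klShiftDerivR] using HasDerivAt.klTerm (hasDerivAt_const ϑ (S * psi δ κ s + lam0))
    ((hψ.const_mul (S + h)).add_const lam0) (hlam0.trans_le (le_mul_psi_add hS s))
    (hlam0.trans_le (le_mul_psi_add hSh _))

include hS hSh hlam0 hδ hκ₀ hκ₁ in
lemma abs_klShiftDerivR_le {ϑ s : ℝ} (hϑ : ϑ₀ ≤ ϑ) (hs : 0 < s) :
    |klShiftDerivR S h lam0 δ κ ϑ₀ ϑ s| ≤
      (S + h) * (κ / δ ^ κ) * ((2 * S + h) / lam0) * s ^ (κ - 1) := by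
  have hψ' : psiDeriv δ κ (s + ϑ - ϑ₀) ≤ κ / δ ^ κ * s ^ (κ - 1) :=
    (psiDeriv_le hδ hκ₀.le (by linarith)).trans (mul_le_mul_of_nonneg_left
      (rpow_le_rpow_of_nonpos hs (by linarith) (by linarith)) (by positivity))
  have hlog : |log (((S + h) * psi δ κ (s + ϑ - ϑ₀) + lam0) / (S * psi δ κ s + lam0))| ≤
      (2 * S + h) / lam0 :=
    (abs_log_div_le hlam0 (le_mul_psi_add hS s) (le_mul_psi_add hSh _)).trans
      (div_le_div_of_nonneg_right (abs_intensity_sub_le hS hSh hκ₀.le _ _) hlam0.le)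
  rw [klShiftDerivR, abs_mul, abs_mul, abs_of_nonneg hSh,
    abs_of_nonneg (psiDeriv_nonneg hδ hκ₀.le)]
  calc (S + h) * psiDeriv δ κ (s + ϑ - ϑ₀) * _
      ≤ (S + h) * (κ / δ ^ κ * s ^ (κ - 1)) * ((2 * S + h) / lam0) := by gcongr
    _ = _ := by ring

include hS hSh hlam0 hδ hκ₀ in
lemma abs_klShiftDerivT_le {ϑ s : ℝ} (hs : 0 < s) :
    |klShiftDerivT S h lam0 δ κ ϑ₀ ϑ s| ≤
      S * (κ / δ ^ κ) * ((2 * S + h) / lam0) * s ^ (κ - 1) := by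
  have hA := hlam0.trans_le (le_mul_psi_add (δ := δ) (κ := κ) hS s)
  have hratio : |1 - ((S + h) * psi δ κ (s + ϑ - ϑ₀) + lam0) / (S * psi δ κ s + lam0)| ≤
      (2 * S + h) / lam0 := by
    rw [one_sub_div hA.ne', abs_div, abs_of_pos hA, abs_sub_comm]
    exact div_le_div₀ (by linarith) (abs_intensity_sub_le hS hSh hκ₀.le _ _) hlam0
      (le_mul_psi_add hS s)
  rw [klShiftDerivT, abs_mul, abs_mul, abs_of_nonneg hS,
    abs_of_nonneg (psiDeriv_nonneg hδ hκ₀.le)]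
  calc S * psiDeriv δ κ s * _ ≤ S * (κ / δ ^ κ * s ^ (κ - 1)) * ((2 * S + h) / lam0) := by
        gcongr
        exact psiDeriv_le hδ hκ₀.le hs
    _ = _ := by ring

include hS hSh hlam0 hδ hκ₀ hκ₁ in
lemma intervalIntegrable_klShiftDerivR {ϑ b : ℝ} (hϑ : ϑ₀ ≤ ϑ) (hb : 0 ≤ b) :
    IntervalIntegrable (klShiftDerivR S h lam0 δ κ ϑ₀ ϑ) volume 0 b :=
  intervalIntegrable_of_abs_le_rpow (by linarith) hb
    (by unfold klShiftDerivR; fun_prop) fun s hs =>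
    abs_klShiftDerivR_le hS hSh hlam0 hδ hκ₀ hκ₁ hϑ hs.1

include hS hSh hlam0 hδ hκ₀ in
lemma intervalIntegrable_klShiftDerivT {ϑ b : ℝ} (hb : 0 ≤ b) :
    IntervalIntegrable (klShiftDerivT S h lam0 δ κ ϑ₀ ϑ) volume 0 b :=
  intervalIntegrable_of_abs_le_rpow (by linarith) hb
    (by unfold klShiftDerivT; fun_prop) fun s hs =>
    abs_klShiftDerivT_le hS hSh hlam0 hδ hκ₀ hs.1

include hS hSh hlam0 hδ hκ₀ hκ₁ in
lemma abs_klShift_sub_klShift_le_of_le {c s x₁ x₂ : ℝ} (hc : 0 < c) (h₁ : c ≤ s + x₁ - ϑ₀)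
    (h₂ : c ≤ s + x₂ - ϑ₀) :
    |klShift S h lam0 δ κ ϑ₀ x₁ s - klShift S h lam0 δ κ ϑ₀ x₂ s| ≤
      (2 * S + h) / lam0 * (S + h) * (κ / δ ^ κ * c ^ (κ - 1)) * |x₁ - x₂| := by
  have hψ := abs_psi_sub_psi_le hδ hκ₀ hκ₁ hc h₂ h₁
  rw [show s + x₁ - ϑ₀ - (s + x₂ - ϑ₀) = x₁ - x₂ by ring] at hψ
  calc _ ≤ (2 * S + h) * 1 / lam0 *
        ((S + h) * |psi δ κ (s + x₁ - ϑ₀) - psi δ κ (s + x₂ - ϑ₀)|) :=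
        abs_klShift_sub_klShift_le hS hSh hlam0 (psi_le_one hκ₀.le) (psi_le_one hκ₀.le)
          (psi_le_one hκ₀.le)
    _ ≤ (2 * S + h) * 1 / lam0 * ((S + h) * (κ / δ ^ κ * c ^ (κ - 1) * |x₁ - x₂|)) := by
        gcongr
        exact div_nonneg (by linarith) hlam0.le
    _ = _ := by ring

include hS hSh hlam0 hδ hκ₀ hκ₁ in
/-- Away from the cusp of the real intensity, `klShift` is Lipschitz in `ϑ` uniformly in `s`. -/
lemma hasDerivAt_integral_klShift_of_pos {a b ϑ : ℝ} (hab : a ≤ b) (ha : 0 < a + ϑ - ϑ₀) :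
    HasDerivAt (fun x => ∫ s in a..b, klShift S h lam0 δ κ ϑ₀ x s)
      (∫ s in a..b, klShiftDerivR S h lam0 δ κ ϑ₀ ϑ s) ϑ := by
  set c := (a + ϑ - ϑ₀) / 2 with hc_def
  have hc : 0 < c := by positivity
  set L := (2 * S + h) / lam0 * (S + h) * (κ / δ ^ κ * c ^ (κ - 1))
  have hcont := continuous_klShift (ϑ₀ := ϑ₀) hS hSh hlam0 (continuous_psi hδ hκ₀)
  have hlip : ∀ s ∈ uIoc a b, LipschitzOnWith (Real.nnabs L)
      (fun x => klShift S h lam0 δ κ ϑ₀ x s) (Metric.ball ϑ c) := fun s hs => by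
    rw [uIoc_of_le hab] at hs
    refine lipschitzOnWith_iff_dist_le_mul.2 fun x₁ h₁ x₂ h₂ => ?_
    rw [Metric.mem_ball, Real.dist_eq, abs_lt] at h₁ h₂
    rw [Real.dist_eq, Real.dist_eq, Real.coe_nnabs]
    exact (abs_klShift_sub_klShift_le_of_le hS hSh hlam0 hδ hκ₀ hκ₁ hc (by linarith [hs.1])
      (by linarith [hs.1])).trans (by gcongr; exact le_abs_self L)
  have hderiv : ∀ᵐ s, s ∈ uIoc a b →
      HasDerivAt (fun x => klShift S h lam0 δ κ ϑ₀ x s) (klShiftDerivR S h lam0 δ κ ϑ₀ ϑ s) ϑ := by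
    filter_upwards [measure_singleton (μ := volume) (δ + ϑ₀ - ϑ) |> compl_mem_ae_iff.2]
      with s (hsδ : s ≠ δ + ϑ₀ - ϑ) hs
    rw [uIoc_of_le hab] at hs
    exact hasDerivAt_klShift hS hSh hlam0 hδ hκ₀ (by linarith [hs.1])
      fun heq => hsδ (by linarith)
  exact (intervalIntegral.hasDerivAt_integral_of_dominated_loc_of_lip
    (Metric.ball_mem_nhds ϑ hc) (Eventually.of_forall fun x => (hcont x).aestronglyMeasurable)
    ((hcont ϑ).intervalIntegrable _ _)
    (by unfold klShiftDerivR; fun_prop : Measurable _).aestronglyMeasurable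
    (Eventually.of_forall hlip) intervalIntegrable_const hderiv).2

include hS hSh hlam0 hδ hκ₀ in
lemma abs_integral_klShift_sub_le {ρ x : ℝ} (hρ : 0 ≤ ρ) (hx : |x - ϑ₀| ≤ ρ) :
    |∫ s in (0 : ℝ)..ρ, (klShift S h lam0 δ κ ϑ₀ x s - klShift S h lam0 δ κ ϑ₀ ϑ₀ s)| ≤
      (2 * S + h) * psi δ κ (2 * ρ) / lam0 * (S + h) * (2 * |x - ϑ₀|) := by
  set K := (2 * S + h) * psi δ κ (2 * ρ) / lam0 * (S + h) with hK_def
  have hψ := continuous_psi hδ hκ₀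
  have hmono := monotone_psi hδ hκ₀
  have hcont := continuous_klShift (ϑ₀ := ϑ₀) hS hSh hlam0 hψ
  have hpoint : ∀ s ∈ Icc 0 ρ,
      |klShift S h lam0 δ κ ϑ₀ x s - klShift S h lam0 δ κ ϑ₀ ϑ₀ s| ≤
        K * |psi δ κ (s + (x - ϑ₀)) - psi δ κ s| := by
    rintro s ⟨hs₀, hsρ⟩
    have hx' := (abs_le.1 hx).2
    have := abs_klShift_sub_klShift_le (x₁ := x) (x₂ := ϑ₀) hS hSh hlam0
      (hmono (by linarith : s ≤ 2 * ρ)) (hmono (by linarith : s + x - ϑ₀ ≤ 2 * ρ))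
      (hmono (by linarith : s + ϑ₀ - ϑ₀ ≤ 2 * ρ))
    simpa only [hK_def, add_sub_cancel_right, ← add_sub_assoc, mul_assoc] using this
  calc _ ≤ ∫ s in (0 : ℝ)..ρ, |klShift S h lam0 δ κ ϑ₀ x s - klShift S h lam0 δ κ ϑ₀ ϑ₀ s| :=
        intervalIntegral.abs_integral_le_integral_abs hρ
    _ ≤ ∫ s in (0 : ℝ)..ρ, K * |psi δ κ (s + (x - ϑ₀)) - psi δ κ s| :=
        intervalIntegral.integral_mono_on hρ
          (((hcont x).sub (hcont ϑ₀)).abs.intervalIntegrable _ _)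
          ((by fun_prop : Continuous fun s => K * |psi δ κ (s + (x - ϑ₀)) - psi δ κ s|)
            |>.intervalIntegrable _ _) hpoint
    _ ≤ K * (2 * 1 * |x - ϑ₀|) := by
        rw [intervalIntegral.integral_const_mul]
        exact mul_le_mul_of_nonneg_left (hmono.integral_abs_comp_add_sub_le
          (fun y => (abs_of_nonneg psi_nonneg).trans_le (psi_le_one hκ₀.le)) _ _ _)
          (mul_nonneg (div_nonneg (mul_nonneg (by linarith) psi_nonneg) hlam0.le) hSh)
    _ = _ := by ring

include hS hSh hlam0 hδ hκ₀ hκ₁ in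
/-- At `ϑ = ϑ₀` both cusps sit at `s = 0`; there the difference quotients of the integral over
`[0, ρ]` are small because both intensities stay within `O(ψ(2ρ))` of `lam0`. -/
lemma hasDerivAt_integral_klShift {ϑ b : ℝ} (hϑ : ϑ₀ ≤ ϑ) (hb : 0 < b) :
    HasDerivAt (fun x => ∫ s in (0 : ℝ)..b, klShift S h lam0 δ κ ϑ₀ x s)
      (∫ s in (0 : ℝ)..b, klShiftDerivR S h lam0 δ κ ϑ₀ ϑ s) ϑ := by
  rcases hϑ.lt_or_eq with hϑ | rfl
  · exact hasDerivAt_integral_klShift_of_pos hS hSh hlam0 hδ hκ₀ hκ₁ hb.le (by linarith)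
  have hψ := continuous_psi hδ hκ₀
  refine hasDerivAt_intervalIntegral_of_head hb
    (fun x => (continuous_klShift hS hSh hlam0 hψ x).intervalIntegrable _ _)
    (intervalIntegrable_klShiftDerivR hS hSh hlam0 hδ hκ₀ hκ₁ le_rfl hb.le)
    (fun ρ hρ => hasDerivAt_integral_klShift_of_pos hS hSh hlam0 hδ hκ₀ hκ₁ hρ.2.le
      (by linarith [hρ.1])) fun ε hε => ?_
  have hK : Tendsto (fun ρ => (2 * S + h) * psi δ κ (2 * ρ) / lam0 * (S + h) * 2) (𝓝[>] 0)
      (𝓝 0) := by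
    have hcont : Continuous fun ρ => (2 * S + h) * psi δ κ (2 * ρ) / lam0 * (S + h) * 2 := by
      fun_prop
    simpa [psi_of_nonpos hδ le_rfl] using (hcont.tendsto 0).mono_left nhdsWithin_le_nhds
  filter_upwards [hK.eventually (eventually_le_nhds hε), self_mem_nhdsWithin]
    with ρ hKρ (hρ : 0 < ρ)
  filter_upwards [Metric.closedBall_mem_nhds ϑ₀ hρ] with x hx
  rw [Metric.mem_closedBall, Real.dist_eq] at hx
  calc _ ≤ (2 * S + h) * psi δ κ (2 * ρ) / lam0 * (S + h) * (2 * |x - ϑ₀|) :=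
        abs_integral_klShift_sub_le hS hSh hlam0 hδ hκ₀ hρ.le hx
    _ = (2 * S + h) * psi δ κ (2 * ρ) / lam0 * (S + h) * 2 * |x - ϑ₀| := by ring
    _ ≤ ε * |x - ϑ₀| := mul_le_mul_of_nonneg_right hKρ (abs_nonneg _)

include hS hSh hlam0 hδ hκ₀ hκ₁ in
lemma integral_klShiftDerivT_add_klShiftDerivR {ϑ b : ℝ} (hϑ : ϑ₀ ≤ ϑ) (hb : 0 ≤ b) :
    ∫ s in (0 : ℝ)..b, (klShiftDerivT S h lam0 δ κ ϑ₀ ϑ s + klShiftDerivR S h lam0 δ κ ϑ₀ ϑ s) =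
      klShift S h lam0 δ κ ϑ₀ ϑ b - klShift S h lam0 δ κ ϑ₀ ϑ 0 := by
  refine intervalIntegral.integral_eq_sub_of_hasDeriv_right_of_le hb
    (continuous_klShift hS hSh hlam0 (continuous_psi hδ hκ₀) ϑ).continuousOn (fun s hs => ?_)
    ((intervalIntegrable_klShiftDerivT hS hSh hlam0 hδ hκ₀ hb).add
      (intervalIntegrable_klShiftDerivR hS hSh hlam0 hδ hκ₀ hκ₁ hϑ hb))
  have hs₀ : 0 < s := hs.1
  have hA : HasDerivWithinAt (fun s => S * psi δ κ s + lam0) (S * psiDeriv δ κ s) (Ioi s) s :=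
    (((hasDerivWithinAt_psi_Ici hδ hκ₀ hs₀).mono Ioi_subset_Ici_self).const_mul S).add_const _
  have hB : HasDerivWithinAt (fun s => (S + h) * psi δ κ (s + ϑ - ϑ₀) + lam0)
      ((S + h) * psiDeriv δ κ (s + ϑ - ϑ₀)) (Ioi s) s := by
    have hshift : HasDerivWithinAt (fun s : ℝ => s + ϑ - ϑ₀) 1 (Ioi s) s :=
      (((hasDerivAt_id s).add_const ϑ).sub_const ϑ₀).hasDerivWithinAt
    have := (hasDerivWithinAt_psi_Ici hδ hκ₀ (by linarith : 0 < s + ϑ - ϑ₀)).comp s hshift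
      fun u (hu : s < u) => (by simp only [mem_Ici]; linarith : u + ϑ - ϑ₀ ∈ Ici _)
    simpa [Function.comp_def] using (this.const_mul (S + h)).add_const lam0
  exact hA.klTerm hB (hlam0.trans_le (le_mul_psi_add hS s)) (hlam0.trans_le (le_mul_psi_add hSh _))

end Shift

section Evaluation

variable {S h lam0 δ κ ϑ₀ : ℝ}

/-- `-δ * klShiftDerivT … (δ * y)`, with `u` in place of the value of the real cusp. -/
noncomputable def cuspIntegrand (S h lam0 κ u y : ℝ) : ℝ :=
  S * κ * y ^ (κ - 1) * ((S + h) * u - S * y ^ κ) / (S * y ^ κ + lam0)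

variable (hS : 0 ≤ S) (hSh : 0 ≤ S + h) (hlam0 : 0 < lam0) (hδ : 0 < δ) (hκ₀ : 0 < κ)

include hS hSh hlam0 hκ₀ in
lemma intervalIntegrable_cuspIntegrand {φ : ℝ → ℝ} (hφ : Measurable φ)
    (hφ₁ : ∀ y, φ y ∈ Icc 0 1) :
    IntervalIntegrable (fun y => cuspIntegrand S h lam0 κ (φ y) y) volume 0 1 := by
  refine intervalIntegrable_of_abs_le_rpow (C := S * κ * (2 * S + h) / lam0) (p := κ - 1)
    (by linarith) zero_le_one (by unfold cuspIntegrand; fun_prop : Measurable _).aestronglyMeasurable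
    fun y ⟨hy₀, hy₁⟩ => ?_
  have hyκ : y ^ κ ∈ Icc 0 1 := ⟨rpow_nonneg hy₀.le _, rpow_le_one hy₀.le hy₁ hκ₀.le⟩
  have hnum : |(S + h) * φ y - S * y ^ κ| ≤ 2 * S + h := by
    simpa [two_mul, add_right_comm] using
      abs_mul_add_sub_mul_add_le (l := 0) (P := 1) hSh hS (hφ₁ y) hyκ
  have hden : lam0 ≤ S * y ^ κ + lam0 := le_add_of_nonneg_left (mul_nonneg hS hyκ.1)
  have hc : 0 ≤ S * κ * y ^ (κ - 1) := by positivity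
  rw [cuspIntegrand, abs_div, abs_mul, abs_of_nonneg hc, abs_of_pos (hlam0.trans_le hden)]
  calc _ ≤ S * κ * y ^ (κ - 1) * (2 * S + h) / lam0 :=
        div_le_div₀ (mul_nonneg hc (by linarith)) (mul_le_mul_of_nonneg_left hnum hc) hlam0 hden
    _ = _ := by ring

include hS hSh hlam0 hκ₀ in
lemma integral_cuspIntegrand_one {m : ℝ} (hm₀ : 0 ≤ m) (hm₁ : m ≤ 1) :
    ∫ y in m..1, cuspIntegrand S h lam0 κ 1 y =
      (S + h + lam0) * log ((S + lam0) / (S * m ^ κ + lam0)) + S * m ^ κ - S := by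
  have hpos : ∀ y, 0 ≤ y → 0 < S * y ^ κ + lam0 := fun y hy => by positivity
  have hint : IntervalIntegrable (cuspIntegrand S h lam0 κ 1) volume m 1 :=
    (intervalIntegrable_cuspIntegrand hS hSh hlam0 hκ₀ measurable_const
      fun _ => ⟨zero_le_one, le_rfl⟩).mono_set (uIcc_subset_uIcc_right (mem_uIcc_of_le hm₀ hm₁))
  have hpow : Continuous fun y : ℝ => y ^ κ := continuous_id.rpow_const fun _ => Or.inr hκ₀.le
  have hderiv : ∀ y ∈ Ioo m 1, HasDerivAt
      (fun y => (S + h + lam0) * log (S * y ^ κ + lam0) - S * y ^ κ)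
      (cuspIntegrand S h lam0 κ 1 y) y := fun y hy => by
    have hy : 0 < y := hm₀.trans_lt hy.1
    have hrpow := hasDerivAt_rpow_const (x := y) (p := κ) (Or.inl hy.ne')
    refine ((((hrpow.const_mul S).add_const lam0).log (hpos y hy.le).ne').const_mul _
      |>.sub (hrpow.const_mul S)).congr_deriv ?_
    rw [cuspIntegrand]
    field_simp
    ring
  have hcont : ContinuousOn (fun y => (S + h + lam0) * log (S * y ^ κ + lam0) - S * y ^ κ)
      (Icc m 1) :=
    (continuousOn_const.mul (((continuous_const.mul hpow).add continuous_const).continuousOn.log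
      fun y hy => (hpos y (hm₀.trans hy.1)).ne')).sub (continuous_const.mul hpow).continuousOn
  rw [intervalIntegral.integral_eq_sub_of_hasDeriv_right_of_le hm₁ hcont
    (fun y hy => (hderiv y hy).hasDerivWithinAt) hint, one_rpow, mul_one,
    log_div (by positivity) (hpos m hm₀).ne']
  ring

include hS hSh hlam0 hδ hκ₀ in
/-- Only the cusp `[0, δ]` of the model intensity contributes; rescale it to `[0, 1]`. -/
lemma integral_klShiftDerivT_eq {ϑ b : ℝ} (hb : δ ≤ b) :
    ∫ s in (0 : ℝ)..b, klShiftDerivT S h lam0 δ κ ϑ₀ ϑ s =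
      -∫ y in (0 : ℝ)..1, cuspIntegrand S h lam0 κ (psi δ κ (δ * y + ϑ - ϑ₀)) y := by
  have hint := intervalIntegrable_klShiftDerivT (ϑ₀ := ϑ₀) (ϑ := ϑ) hS hSh hlam0 hδ hκ₀
    (hδ.le.trans hb)
  have hδb : δ ∈ uIcc 0 b := mem_uIcc_of_le hδ.le hb
  have htail : ∫ s in δ..b, klShiftDerivT S h lam0 δ κ ϑ₀ ϑ s = 0 := by
    refine intervalIntegral.integral_zero_ae (Eventually.of_forall fun s hs => ?_)
    rw [uIoc_of_le hb] at hs
    simp [klShiftDerivT, psiDeriv, not_lt.2 hs.1.le]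
  have hscale := intervalIntegral.smul_integral_comp_mul_left
    (klShiftDerivT S h lam0 δ κ ϑ₀ ϑ) δ (a := 0) (b := 1)
  rw [mul_zero, mul_one] at hscale
  rw [← intervalIntegral.integral_add_adjacent_intervals (hint.mono_set (uIcc_subset_uIcc_left hδb))
    (hint.mono_set (uIcc_subset_uIcc_right hδb)), htail, add_zero, ← hscale,
    ← intervalIntegral.integral_smul, ← intervalIntegral.integral_neg]
  refine intervalIntegral.integral_congr_ae ?_
  filter_upwards [measure_singleton (μ := volume) (1 : ℝ) |> compl_mem_ae_iff.2]
    with y (hy₁ : y ≠ 1) hy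
  rw [uIoc_of_le zero_le_one] at hy
  have hδy : δ * y ∈ Ioo 0 δ := ⟨by nlinarith [hy.1], by nlinarith [lt_of_le_of_ne hy.2 hy₁]⟩
  have hψ : psi δ κ (δ * y) = y ^ κ := by
    rw [psi_of_mem_Icc hδ hκ₀ (Ioo_subset_Icc_self hδy), mul_div_cancel_left₀ _ hδ.ne']
  have hψ' : psiDeriv δ κ (δ * y) = κ / δ * y ^ (κ - 1) := by
    rw [psiDeriv, if_pos (show 0 < δ * y ∧ δ * y < δ from hδy), mul_div_cancel_left₀ _ hδ.ne']
  have hden : 0 < S * y ^ κ + lam0 := by have := hy.1; positivity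
  rw [smul_eq_mul, klShiftDerivT, cuspIntegrand, hψ, hψ']
  field_simp
  ring

include hS hSh hlam0 hδ hκ₀ in
lemma neg_integral_klShiftDerivT_eq {ϑ b : ℝ} (hϑ : ϑ₀ ≤ ϑ) (hϑδ : ϑ ≤ ϑ₀ + δ) (hb : δ ≤ b) :
    -∫ s in (0 : ℝ)..b, klShiftDerivT S h lam0 δ κ ϑ₀ ϑ s =
      (S + h + lam0) * log ((S + lam0) / (S * (1 - (ϑ - ϑ₀) / δ) ^ κ + lam0)) +
        S * (1 - (ϑ - ϑ₀) / δ) ^ κ - S +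
        ∫ x in (0 : ℝ)..(1 - (ϑ - ϑ₀) / δ),
          S * κ * x ^ (κ - 1) * ((S + h) * (x + (ϑ - ϑ₀) / δ) ^ κ - S * x ^ κ) /
            (S * x ^ κ + lam0) := by
  set d := (ϑ - ϑ₀) / δ
  have hd₀ : 0 ≤ d := div_nonneg (by linarith) hδ.le
  have hd₁ : d ≤ 1 := (div_le_one hδ).2 (by linarith)
  have hshift : ∀ y, δ * y + ϑ - ϑ₀ = δ * (y + d) := fun y => by
    simp only [d]; field_simp; ring
  have hm : 1 - d ∈ uIcc 0 1 := mem_uIcc_of_le (by linarith) (by linarith)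
  have hint := intervalIntegrable_cuspIntegrand (φ := fun y => psi δ κ (δ * y + ϑ - ϑ₀))
    hS hSh hlam0 hκ₀ (by fun_prop) fun y => ⟨psi_nonneg, psi_le_one hκ₀.le⟩
  have hhead : ∀ y ∈ uIcc 0 (1 - d), cuspIntegrand S h lam0 κ (psi δ κ (δ * y + ϑ - ϑ₀)) y =
      S * κ * y ^ (κ - 1) * ((S + h) * (y + d) ^ κ - S * y ^ κ) / (S * y ^ κ + lam0) := by
    intro y hy
    rw [uIcc_of_le (by linarith)] at hy
    rw [hshift, psi_of_mem_Icc hδ hκ₀ ⟨by nlinarith [hy.1], by nlinarith [hy.2]⟩,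
      mul_div_cancel_left₀ _ hδ.ne', cuspIntegrand]
  have htail : ∀ y ∈ uIcc (1 - d) 1, cuspIntegrand S h lam0 κ (psi δ κ (δ * y + ϑ - ϑ₀)) y =
      cuspIntegrand S h lam0 κ 1 y := by
    intro y hy
    rw [uIcc_of_le (by linarith)] at hy
    rw [hshift, psi_of_le (by nlinarith [hy.1])]
  rw [integral_klShiftDerivT_eq hS hSh hlam0 hδ hκ₀ hb, neg_neg,
    ← intervalIntegral.integral_add_adjacent_intervals (hint.mono_set (uIcc_subset_uIcc_left hm))
      (hint.mono_set (uIcc_subset_uIcc_right hm)),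
    intervalIntegral.integral_congr hhead, intervalIntegral.integral_congr htail,
    integral_cuspIntegrand_one hS hSh hlam0 hκ₀ (by linarith) (by linarith)]
  ring

end Evaluation

section Divergence

variable {S h lam0 δ κ ϑ₀ : ℝ}

lemma add_pos_of_div_log_sub_lt (hS : 0 < S) (hlam0 : 0 < lam0)
    (hH : S / log (1 + S / lam0) - S - lam0 < h) : 0 < S + h := by
  have hx : 0 < S / lam0 := div_pos hS hlam0
  have hlog₀ : 0 < log (1 + S / lam0) := log_pos (by linarith)
  have hlog : log (1 + S / lam0) < S / lam0 := by
    linarith [log_lt_sub_one_of_pos (by linarith : 0 < 1 + S / lam0) (by linarith)]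
  have : lam0 < S / log (1 + S / lam0) := by
    rw [lt_div_iff₀ hlog₀]
    calc lam0 * log (1 + S / lam0) < lam0 * (S / lam0) := mul_lt_mul_of_pos_left hlog hlam0
      _ = S := mul_div_cancel₀ _ hlam0.ne'
  linarith

variable (hS : 0 ≤ S) (hSh : 0 ≤ S + h) (hlam0 : 0 < lam0) (hδ : 0 < δ) (hκ₀ : 0 < κ)
  (hκ₁ : κ ≤ 1)

include hS hSh hlam0 hδ hκ₀ in
/-- On `[min ϑ ϑ₀, ϑ]` only the real intensity can differ from `lam0`, and beyond `b` after the
substitution `t = s + ϑ` both intensities are saturated. -/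
lemma JKL_eq {τ ϑ b : ℝ} (hb : δ ≤ b) (hbϑ : δ ≤ b + ϑ - ϑ₀) (hbτ : b ≤ τ - ϑ) :
    JKL S h lam0 δ κ τ ϑ₀ ϑ =
      (∫ t in ϑ₀..ϑ, klTerm lam0 ((S + h) * psi δ κ (t - ϑ₀) + lam0)) +
        (∫ s in (0 : ℝ)..b, klShift S h lam0 δ κ ϑ₀ ϑ s) +
        (τ - ϑ - b) * klTerm (S + lam0) (S + h + lam0) := by
  set F := fun t => klTerm (lamT S lam0 δ κ ϑ t) (lamR S h lam0 δ κ ϑ₀ t)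
  set G := fun t => klTerm lam0 ((S + h) * psi δ κ (t - ϑ₀) + lam0)
  have hψ := continuous_psi hδ hκ₀
  have hF : Continuous F := Continuous.klTerm (by unfold lamT; fun_prop) (by unfold lamR; fun_prop)
    (fun t => hlam0.trans_le (le_mul_psi_add hS _)) (fun t => hlam0.trans_le (le_mul_psi_add hSh _))
  have hG : Continuous G := Continuous.klTerm continuous_const (by fun_prop) (fun _ => hlam0)
    (fun t => hlam0.trans_le (le_mul_psi_add hSh _))
  have hK := continuous_klShift (ϑ₀ := ϑ₀) hS hSh hlam0 hψ ϑ
  have hhead : ∫ t in (min ϑ ϑ₀)..ϑ, F t = ∫ t in ϑ₀..ϑ, G t := by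
    have hFG : EqOn F G (uIcc (min ϑ ϑ₀) ϑ) := fun t ht => by
      rw [uIcc_of_le (min_le_left _ _)] at ht
      simp [F, G, lamT, lamR, psi_of_nonpos hδ (sub_nonpos.2 ht.2)]
    have hG₀ : EqOn G 0 (uIcc (min ϑ ϑ₀) ϑ₀) := fun t ht => by
      rw [uIcc_of_le (min_le_right _ _)] at ht
      simp [G, psi_of_nonpos hδ (sub_nonpos.2 ht.2), klTerm_self]
    rw [intervalIntegral.integral_congr hFG, ← intervalIntegral.integral_add_adjacent_intervals
      (hG.intervalIntegrable _ ϑ₀) (hG.intervalIntegrable _ _), intervalIntegral.integral_congr hG₀,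
      Pi.zero_def, intervalIntegral.integral_zero, zero_add]
  have hshift : ∫ t in ϑ..τ, F t = ∫ s in (0 : ℝ)..(τ - ϑ), klShift S h lam0 δ κ ϑ₀ ϑ s := by
    have := intervalIntegral.integral_comp_add_right (a := 0) (b := τ - ϑ) F ϑ
    rw [zero_add, sub_add_cancel] at this
    rw [← this]
    simp [F, klShift, lamT, lamR]
  have hsat : EqOn (klShift S h lam0 δ κ ϑ₀ ϑ) (fun _ => klTerm (S + lam0) (S + h + lam0))
      (uIcc b (τ - ϑ)) := fun s hs => by
    rw [uIcc_of_le hbτ] at hs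
    simp [klShift, psi_of_le (hb.trans hs.1), psi_of_le (by linarith [hs.1] : δ ≤ s + ϑ - ϑ₀)]
  rw [show JKL S h lam0 δ κ τ ϑ₀ ϑ = ∫ t in (min ϑ ϑ₀)..τ, F t from rfl,
    ← intervalIntegral.integral_add_adjacent_intervals (hF.intervalIntegrable _ ϑ)
      (hF.intervalIntegrable _ _), hhead, hshift,
    ← intervalIntegral.integral_add_adjacent_intervals (hK.intervalIntegrable 0 b)
      (hK.intervalIntegrable _ _), intervalIntegral.integral_congr hsat,
    intervalIntegral.integral_const, smul_eq_mul]
  ring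

include hS hSh hlam0 hδ hκ₀ hκ₁ in
lemma hasDerivAt_JKL {τ ϑ b : ℝ} (hϑ : ϑ₀ ≤ ϑ) (hb : δ < b) (hbτ : b < τ - ϑ) :
    HasDerivAt (JKL S h lam0 δ κ τ ϑ₀)
      (-∫ s in (0 : ℝ)..b, klShiftDerivT S h lam0 δ κ ϑ₀ ϑ s) ϑ := by
  set G := fun t => klTerm lam0 ((S + h) * psi δ κ (t - ϑ₀) + lam0)
  set c := klTerm (S + lam0) (S + h + lam0)
  have hG : Continuous G := Continuous.klTerm continuous_const
    (by have := continuous_psi hδ hκ₀; fun_prop) (fun _ => hlam0)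
    (fun t => hlam0.trans_le (le_mul_psi_add hSh _))
  have hJ : JKL S h lam0 δ κ τ ϑ₀ =ᶠ[𝓝 ϑ] fun x => (∫ t in ϑ₀..x, G t) +
      (∫ s in (0 : ℝ)..b, klShift S h lam0 δ κ ϑ₀ x s) + (τ - x - b) * c := by
    filter_upwards [eventually_gt_nhds (show ϑ₀ + δ - b < ϑ by linarith),
      eventually_lt_nhds (show ϑ < τ - b by linarith)] with x hx₁ hx₂
    exact JKL_eq hS hSh hlam0 hδ hκ₀ hb.le (by linarith) (by linarith)
  have hderiv := ((hG.integral_hasStrictDerivAt ϑ₀ ϑ).hasDerivAt.add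
    (hasDerivAt_integral_klShift hS hSh hlam0 hδ hκ₀ hκ₁ hϑ (hδ.trans hb))).add
    ((((hasDerivAt_id ϑ).const_sub τ).sub_const b).mul_const c)
  refine (hderiv.congr_of_eventuallyEq hJ).congr_deriv ?_
  -- `∫ klShiftDerivR` is eliminated by integrating `∂_s klShift` over `[0, b]`
  have hFTC := integral_klShiftDerivT_add_klShiftDerivR hS hSh hlam0 hδ hκ₀ hκ₁ hϑ
    (hδ.trans hb).le
  rw [intervalIntegral.integral_add
    (intervalIntegrable_klShiftDerivT hS hSh hlam0 hδ hκ₀ (hδ.trans hb).le)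
    (intervalIntegrable_klShiftDerivR hS hSh hlam0 hδ hκ₀ hκ₁ hϑ (hδ.trans hb).le)] at hFTC
  have hb_val : klShift S h lam0 δ κ ϑ₀ ϑ b = c := by
    simp [klShift, c, psi_of_le hb.le, psi_of_le (by linarith : δ ≤ b + ϑ - ϑ₀)]
  have h0_val : klShift S h lam0 δ κ ϑ₀ ϑ 0 = G ϑ := by
    simp [klShift, G, psi_of_nonpos hδ le_rfl]
  linarith

end Divergence

theorem stmt_3_general (S lam0 δ τ κ α β ϑ₀ h : ℝ)
    (hS : 0 < S) (hlam0 : 0 < lam0) (hδ : 0 < δ)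
    (hκ : κ ∈ Set.Ioo (0 : ℝ) (1 / 2))
    (hΘ : Set.Ioo (α - δ) (β + δ) ⊆ Set.Ioo 0 (τ - δ))
    (hϑ₀ : ϑ₀ ∈ Set.Ioo α β)
    (hH : S / Real.log (1 + S / lam0) - S - lam0 < h) :
    ∀ ϑ ∈ Set.Icc ϑ₀ (ϑ₀ + δ),
      HasDerivAt (JKL S h lam0 δ κ τ ϑ₀)
        ((S + h + lam0) *
            Real.log ((S + lam0) / (S * (1 - (ϑ - ϑ₀) / δ) ^ κ + lam0)) +
          S * (1 - (ϑ - ϑ₀) / δ) ^ κ - S +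
          ∫ x in (0 : ℝ)..(1 - (ϑ - ϑ₀) / δ),
            S * κ * x ^ (κ - 1) *
              ((S + h) * (x + (ϑ - ϑ₀) / δ) ^ κ - S * x ^ κ) / (S * x ^ κ + lam0)) ϑ := by
  rintro ϑ ⟨hϑ, hϑδ⟩
  have hSh := (add_pos_of_div_log_sub_lt hS hlam0 hH).le
  have hκ₁ : κ ≤ 1 := by linarith [hκ.2]
  have hτ : ϑ₀ + δ < τ - δ :=
    (hΘ ⟨by linarith [hϑ₀.1], by linarith [hϑ₀.2]⟩ : ϑ₀ + δ ∈ Ioo 0 (τ - δ)).2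
  have hb : δ < (τ - ϑ₀) / 2 := by linarith
  rw [← neg_integral_klShiftDerivT_eq hS.le hSh hlam0 hδ hκ.1 hϑ hϑδ hb.le]
  exact hasDerivAt_JKL hS.le hSh hlam0 hδ hκ.1 hκ₁ hϑ hb (by linarith)

theorem stmt_3 (S lam0 δ τ κ α β ϑ₀ h : ℝ)
    (hS : 0 < S) (hlam0 : 0 < lam0) (hδ : 0 < δ) (hτ : 0 < τ)
    (hκ : κ ∈ Set.Ioo (0 : ℝ) (1 / 2)) (hαβ : α < β)
    (hΘ : Set.Ioo (α - δ) (β + δ) ⊆ Set.Ioo 0 (τ - δ))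
    (hϑ₀ : ϑ₀ ∈ Set.Ioo α β)
    (hH : S / Real.log (1 + S / lam0) - S - lam0 < h) :
    ∀ ϑ ∈ Set.Icc ϑ₀ (ϑ₀ + δ),
      HasDerivAt (JKL S h lam0 δ κ τ ϑ₀)
        ((S + h + lam0) *
            Real.log ((S + lam0) / (S * (1 - (ϑ - ϑ₀) / δ) ^ κ + lam0)) +
          S * (1 - (ϑ - ϑ₀) / δ) ^ κ - S +
          ∫ x in (0 : ℝ)..(1 - (ϑ - ϑ₀) / δ),
            S * κ * x ^ (κ - 1) *
              ((S + h) * (x + (ϑ - ϑ₀) / δ) ^ κ - S * x ^ κ) / (S * x ^ κ + lam0)) ϑ :=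
  stmt_3_general S lam0 δ τ κ α β ϑ₀ h hS hlam0 hδ hκ hΘ hϑ₀ hH
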